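/- arXiv:2011.00322 — 4 statements merged into one kernel-verified Lean document; each statement's English description precedes it below -/
import Mathlib

section
/- Let $p$ be an odd prime, $H = C_p \rtimes_{\Phi} D$ a semidirect product with $D$ finite, and suppose $(a,\alpha)$, $(b,\beta)$, and their product are three pairwise commuting involutions of $H$ with $a \neq 0$ and $b \neq 0$. Then $a = b$ and the product equals $(0, \alpha\beta)$, where $\Phi(\alpha\beta)$ is the trivial automorphism. -/
/-!
Every additive endomorphism of `ZMod p` is multiplication by its value at `1`, so an automorphism
negating one nonzero element is negation. Hence `Φ α` and `Φ β` are both negation and `Φ (α * β)`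
is trivial; the third involution condition then reads `2 (a - b) = 0`, and `2` is invertible
since `p` is odd.
-/

namespace ZMod

theorem map_eq_map_one_mul {n : ℕ} {F : Type*} [FunLike F (ZMod n) (ZMod n)]
    [AddMonoidHomClass F (ZMod n) (ZMod n)] (f : F) (x : ZMod n) : f x = f 1 * x := by
  rw [mul_comm, ← x.intCast_zmod_cast, ← zsmul_eq_mul, ← map_zsmul, zsmul_one]

theorem map_eq_neg_of_add_map_eq_zero {p : ℕ} [Fact p.Prime] {F : Type*}
    [FunLike F (ZMod p) (ZMod p)] [AddMonoidHomClass F (ZMod p) (ZMod p)] (f : F)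
    {c : ZMod p} (hc : c ≠ 0) (hfc : c + f c = 0) (x : ZMod p) : f x = -x := by
  have hf1 : f 1 = -1 := by
    refine mul_right_cancel₀ hc ?_
    rw [← map_eq_map_one_mul, neg_one_mul, eq_neg_iff_add_eq_zero, add_comm, hfc]
  rw [map_eq_map_one_mul, hf1, neg_one_mul]

theorem two_ne_zero_of_odd {p : ℕ} [Fact (1 < p)] (hp : Odd p) : (2 : ZMod p) ≠ 0 := by
  refine Ring.two_ne_zero ?_
  rw [ringChar_zmod_n]
  rintro rfl
  exact absurd hp (by decide)

end ZMod

theorem stmt_4_general (p : ℕ) [Fact p.Prime] (hp : Odd p)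
    (D : Type*) [Group D] (Φ : D →* Multiplicative (AddAut (ZMod p)))
    (a b : ZMod p) (α β : D) (ha : a ≠ 0) (hb : b ≠ 0)
    -- `(a,α)` is an involution
    (hinva : a + Φ α a = 0)
    -- `(b,β)` is an involution
    (hinvb : b + Φ β b = 0)
    -- the product `(a + Φ(α)(b), αβ)` is an involution
    (hinvab : (a + Φ α b) + Φ (α * β) (a + Φ α b) = 0) :
    a = b ∧ a + Φ α b = 0 ∧ Φ (α * β) = 1 := by
  have hΦα := ZMod.map_eq_neg_of_add_map_eq_zero (Multiplicative.toAdd (Φ α)) ha hinva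
  have hΦβ := ZMod.map_eq_neg_of_add_map_eq_zero (Multiplicative.toAdd (Φ β)) hb hinvb
  have hΦαβ (x : ZMod p) : Φ (α * β) x = x := by
    rw [map_mul]
    change Φ α (Φ β x) = x
    rw [hΦα, hΦβ, neg_neg]
  have hab : a = b := by
    rw [hΦαβ, hΦα] at hinvab
    have h2 : (2 : ZMod p) * (a - b) = 0 := by linear_combination hinvab
    exact sub_eq_zero.mp ((mul_eq_zero.mp h2).resolve_left (ZMod.two_ne_zero_of_odd hp))
  exact ⟨hab, by rw [hΦα, hab, add_neg_cancel], AddEquiv.ext hΦαβ⟩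

/-- In `H = C_p ⋊_Φ D` (`p` odd prime, multiplication
`(a,α)(b,β) = (a + Φ(α)(b), αβ)`), if `(a,α)`, `(b,β)` and their product are three
pairwise commuting involutions with `a ≠ 0` and `b ≠ 0`, then `a = b`, the product is
`(0, αβ)`, and `Φ(αβ)` is trivial. -/
theorem stmt_4 (p : ℕ) [Fact p.Prime] (hp : Odd p)
    (D : Type*) [Group D] [Finite D] (Φ : D →* Multiplicative (AddAut (ZMod p)))
    (a b : ZMod p) (α β : D) (ha : a ≠ 0) (hb : b ≠ 0)
    -- `(a,α)` is an involution
    (hα : α ^ 2 = 1) (hinva : a + Φ α a = 0)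
    -- `(b,β)` is an involution
    (hβ : β ^ 2 = 1) (hinvb : b + Φ β b = 0)
    -- the product `(a + Φ(α)(b), αβ)` is an involution
    (hαβ : (α * β) ^ 2 = 1)
    (hinvab : (a + Φ α b) + Φ (α * β) (a + Φ α b) = 0)
    -- `(a,α)` and `(b,β)` commute
    (hcomm1 : a + Φ α b = b + Φ β a) (hcomm2 : α * β = β * α) :
    a = b ∧ a + Φ α b = 0 ∧ Φ (α * β) = 1 :=
  stmt_4_general p hp D Φ a b α β ha hb hinva hinvb hinvab
end

section
/- Let $H$ be a group of order $60$ that is generated by involutions and contains a subgroup isomorphic to the dihedral group of order $6$. If the Sylow $5$-subgroup of $H$ is not normal, then $H \cong A_5$. -/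
/-!
A group generated by involutions has no proper normal subgroup of odd index. If `N` is a
proper nontrivial normal subgroup of `H`, then either `5 ∣ |N|`, and `N` (of order at most 30)
has a unique Sylow 5-subgroup, which by Frattini's argument is normal in `H`; or `5 ∣ |H ⧸ N|`,
and the preimage of the normal Sylow 5-subgroup of `H ⧸ N` is a normal subgroup of index prime
to 5, which by the first case is `H`, so that `H ⧸ N` is a 5-group, of odd order. Hence `H` is
simple.

In a simple group of order 60 every proper subgroup has index at least 5, since `60 ∤ 4!`.
Counting elements, either a Sylow 2-subgroup has 5 conjugates, or two Sylow 2-subgroups share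
an element `z ≠ 1`, whose centralizer then has order 12. A subgroup of index 5 embeds `H` in
`S₅` with image of index 2, that is, onto `A₅`.
-/

open Subgroup
open scoped Nat

namespace Sylow

variable {G : Type*} [Group G] {p : ℕ} [Fact p.Prime]

theorem le_of_not_dvd_index (P : Sylow p G) {N : Subgroup G} [N.Normal] (hN : ¬ p ∣ N.index) :
    (P : Subgroup G) ≤ N := by
  have hmap : (P : Subgroup G).map (QuotientGroup.mk' N) = ⊥ := by
    refine card_eq_one.mp ((P.isPGroup'.map _).card_eq_or_dvd.resolve_right fun h => hN ?_)
    rw [index_eq_card]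
    exact h.trans (card_subgroup_dvd_card _)
  simpa using (Subgroup.map_eq_bot_iff _).mp hmap

variable [Finite G]

theorem card_eq_of_card_eq_mul {k m : ℕ} (P : Sylow p G) (h : Nat.card G = p ^ k * m)
    (hm : ¬ p ∣ m) : Nat.card P = p ^ k := by
  have hm0 : m ≠ 0 := by rintro rfl; exact hm (dvd_zero p)
  rw [P.card_eq_multiplicity, h, Nat.factorization_mul (by simp [(Fact.out : p.Prime).ne_zero]) hm0,
    Finsupp.add_apply, Nat.Prime.factorization_pow Fact.out, Finsupp.single_eq_same,
    Nat.factorization_eq_zero_of_not_dvd hm, add_zero]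

theorem index_eq_of_card_eq_mul {k m : ℕ} (P : Sylow p G) (h : Nat.card G = p ^ k * m)
    (hm : ¬ p ∣ m) : (P : Subgroup G).index = m := by
  have h' := (P : Subgroup G).card_mul_index
  rw [P.card_eq_of_card_eq_mul h hm, h] at h'
  exact Nat.eq_of_mul_eq_mul_left (by simp [(Fact.out : p.Prime).pos]) h'

theorem card_dvd_of_card_eq_mul {k m : ℕ} (h : Nat.card G = p ^ k * m) (hm : ¬ p ∣ m) :
    Nat.card (Sylow p G) ∣ m :=
  (default : Sylow p G).index_eq_of_card_eq_mul h hm ▸ card_dvd_index default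

theorem card_eq_of_not_subsingleton {k m n : ℕ} (h : Nat.card G = p ^ k * m) (hm : ¬ p ∣ m)
    (hn : ∀ d ∈ m.divisors, d % p = 1 → d ≠ 1 → d = n)
    (hs : ¬ Subsingleton (Sylow p G)) :
    Nat.card (Sylow p G) = n := by
  refine hn _ (Nat.mem_divisors.mpr ⟨card_dvd_of_card_eq_mul h hm, ?_⟩) ?_ ?_
  · rintro rfl
    exact hm (dvd_zero p)
  · rw [card_sylow_modEq_one p G, Nat.mod_eq_of_lt (Fact.out : p.Prime).one_lt]
  · exact fun h1 => hs (Nat.card_eq_one_iff_unique.mp h1).1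

theorem subsingleton_of_card_eq_mul_of_lt {k m : ℕ} (h : Nat.card G = p ^ k * m) (hm : m < p) :
    Subsingleton (Sylow p G) := by
  have hm0 : m ≠ 0 := by rintro rfl; exact Nat.card_pos.ne' (by simpa using h)
  have hdvd := card_dvd_of_card_eq_mul h (Nat.not_dvd_of_pos_of_lt (Nat.pos_of_ne_zero hm0) hm)
  have hmod : Nat.card (Sylow p G) % p = 1 % p := card_sylow_modEq_one p G
  rw [Nat.mod_eq_of_lt ((Nat.le_of_dvd (Nat.pos_of_ne_zero hm0) hdvd).trans_lt hm),
    Nat.mod_eq_of_lt (Fact.out : p.Prime).one_lt] at hmod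
  exact (Nat.card_eq_one_iff_unique.mp hmod).1

theorem pairwise_disjoint_of_card_eq_mul {m : ℕ} (h : Nat.card G = p * m) (hm : ¬ p ∣ m) :
    Pairwise fun P Q : Sylow p G => Disjoint (P : Subgroup G) Q := by
  intro P Q hPQ
  have hP : Nat.card P = p := by simpa using P.card_eq_of_card_eq_mul (k := 1) (by simpa) hm
  have : Fact (Nat.card P).Prime := ⟨by rw [hP]; exact Fact.out⟩
  rcases ((Q : Subgroup G).subgroupOf P).eq_bot_or_eq_top_of_prime_card with h | h
  · exact (subgroupOf_eq_bot.mp h).symm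
  · refine absurd (Sylow.ext (eq_of_le_of_card_ge (subgroupOf_eq_top.mp h) ?_)) hPQ
    rw [hP, Q.card_eq_of_card_eq_mul (k := 1) (by simpa) hm, pow_one]

theorem normal_of_subsingleton_of_normal (P : Sylow p G) {N : Subgroup G} [N.Normal]
    [Subsingleton (Sylow p N)] (hN : ¬ p ∣ N.index) : (P : Subgroup G).Normal := by
  have hPN := P.le_of_not_dvd_index hN
  have hle : N ≤ normalizer (P : Subgroup G) := by
    rw [← normal_subgroupOf_iff_le_normalizer hPN, ← P.coe_subtype hPN]
    exact normal_of_subsingleton _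
  rw [← normalizer_eq_top_iff, ← P.normalizer_sup_eq_top' hPN, P.coe_coe, sup_of_le_left]
  exact hle

theorem ncard_iUnion_sdiff_one (hdisj : Pairwise fun P Q : Sylow p G => Disjoint (P : Subgroup G) Q)
    (P₀ : Sylow p G) :
    (⋃ P : Sylow p G, (P : Set G) \ {1}).ncard = Nat.card (Sylow p G) * (Nat.card P₀ - 1) := by
  have hcard : ∀ P : Sylow p G, ((P : Set G) \ {1}).ncard = Nat.card P₀ - 1 := by
    intro P
    rw [Set.ncard_sdiff_singleton_of_mem (one_mem P), ← Nat.card_coe_set_eq,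
      show Nat.card (P : Set G) = Nat.card P from rfl, P.card_eq_multiplicity,
      P₀.card_eq_multiplicity]
  have := Fintype.ofFinite (Sylow p G)
  rw [Set.ncard_iUnion_of_finite (fun _ => Set.toFinite _), finsum_congr hcard,
    finsum_eq_sum_of_fintype, Finset.sum_const, Finset.card_univ, smul_eq_mul,
    Nat.card_eq_fintype_card (α := Sylow p G)]
  intro P Q hPQ
  exact Set.disjoint_left.mpr fun g hgP hgQ =>
    hgP.2 (Subgroup.disjoint_def.mp (hdisj hPQ) hgP.1 hgQ.1)

theorem card_mul_add_card_mul_lt {q : ℕ} [Fact q.Prime] (hpq : p ≠ q)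
    (hp : Pairwise fun P Q : Sylow p G => Disjoint (P : Subgroup G) Q)
    (hq : Pairwise fun P Q : Sylow q G => Disjoint (P : Subgroup G) Q)
    (P : Sylow p G) (Q : Sylow q G) :
    Nat.card (Sylow p G) * (Nat.card P - 1) + Nat.card (Sylow q G) * (Nat.card Q - 1) <
      Nat.card G := by
  have hdisj : Disjoint (⋃ P : Sylow p G, (P : Set G) \ {1})
      (⋃ Q : Sylow q G, (Q : Set G) \ {1}) := by
    simp only [Set.disjoint_iUnion_left, Set.disjoint_iUnion_right]
    intro Q P
    refine Set.disjoint_left.mpr fun g hgP hgQ => hgP.2 ?_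
    exact Subgroup.disjoint_def.mp (IsPGroup.disjoint_of_ne p q hpq _ _ P.isPGroup' Q.isPGroup')
      hgP.1 hgQ.1
  have hone : (1 : G) ∉
      (⋃ P : Sylow p G, (P : Set G) \ {1}) ∪ ⋃ Q : Sylow q G, (Q : Set G) \ {1} := by
    simp
  rw [← ncard_iUnion_sdiff_one hp, ← ncard_iUnion_sdiff_one hq, ← Set.ncard_union_eq hdisj,
    ← Set.ncard_univ]
  exact Set.ncard_lt_ncard (Set.ssubset_univ_iff.mpr fun h => hone (h ▸ Set.mem_univ 1))

end Sylow

theorem Subgroup.eq_top_of_odd_index_of_closure_orderOf_eq_two {G : Type*} [Group G]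
    (hgen : closure {g : G | orderOf g = 2} = ⊤) (N : Subgroup G) [N.Normal] (hN : Odd N.index) :
    N = ⊤ := by
  rw [eq_top_iff, ← hgen, closure_le]
  intro t ht
  rw [SetLike.mem_coe, ← QuotientGroup.eq_one_iff, ← orderOf_eq_one_iff]
  have h2 : orderOf (t : G ⧸ N) ∣ 2 := ht ▸ orderOf_map_dvd (QuotientGroup.mk' N) t
  have hodd : orderOf (t : G ⧸ N) ∣ N.index := index_eq_card N ▸ _root_.orderOf_dvd_natCard _
  exact Nat.eq_one_of_dvd_coprimes hN.coprime_two_left h2 hodd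

section

variable {G : Type*} [Group G] [Finite G]

-- The preimage of the Sylow 5-subgroup of the quotient by the normal Sylow 3-subgroup has
-- order 15, hence a unique Sylow 5-subgroup.
theorem Sylow.subsingleton_five_of_subsingleton_three_of_card_eq_thirty (h : Nat.card G = 30)
    [Subsingleton (Sylow 3 G)] : Subsingleton (Sylow 5 G) := by
  have : Fact (Nat.Prime 3) := ⟨by norm_num⟩
  have : Fact (Nat.Prime 5) := ⟨by norm_num⟩
  let T : Sylow 3 G := default
  have := T.normal_of_subsingleton
  have hq : Nat.card (G ⧸ (T : Subgroup G)) = 5 ^ 1 * 2 := by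
    rw [← index_eq_card,
      T.index_eq_of_card_eq_mul (k := 1) (m := 10) (by norm_num [h]) (by norm_num)]
    norm_num
  have := subsingleton_of_card_eq_mul_of_lt hq (by norm_num)
  let Q : Sylow 5 (G ⧸ (T : Subgroup G)) := default
  have := Q.normal_of_subsingleton
  let M := (Q : Subgroup _).comap (QuotientGroup.mk' (T : Subgroup G))
  have hMi : M.index = 2 := by
    rw [index_comap_of_surjective _ (QuotientGroup.mk'_surjective _),
      Q.index_eq_of_card_eq_mul hq (by norm_num)]
  have hM : Nat.card M = 5 ^ 1 * 3 := by
    have := M.card_mul_index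
    rw [hMi, h] at this
    omega
  have := subsingleton_of_card_eq_mul_of_lt hM (by norm_num)
  have hP := (default : Sylow 5 G).normal_of_subsingleton_of_normal (N := M)
    (by rw [hMi]; norm_num)
  exact (unique_of_normal _ hP).instSubsingleton

theorem Sylow.subsingleton_five_of_card_eq_thirty (h : Nat.card G = 30) :
    Subsingleton (Sylow 5 G) := by
  have : Fact (Nat.Prime 3) := ⟨by norm_num⟩
  have : Fact (Nat.Prime 5) := ⟨by norm_num⟩
  by_cases h3 : Subsingleton (Sylow 3 G)
  · exact subsingleton_five_of_subsingleton_three_of_card_eq_thirty h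
  by_contra h5
  -- then 6 Sylow 5-subgroups and 10 Sylow 3-subgroups, of prime order, would need
  -- 24 + 20 nonidentity elements
  have hG3 : Nat.card G = 3 ^ 1 * 10 := by norm_num [h]
  have hG5 : Nat.card G = 5 ^ 1 * 6 := by norm_num [h]
  have h5 : Nat.card (Sylow 5 G) = 6 :=
    card_eq_of_not_subsingleton hG5 (by norm_num) (by decide) h5
  have h3 : Nat.card (Sylow 3 G) = 10 :=
    card_eq_of_not_subsingleton hG3 (by norm_num) (by decide) h3
  have := card_mul_add_card_mul_lt (by norm_num : 5 ≠ 3)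
    (pairwise_disjoint_of_card_eq_mul (m := 6) (by rw [h]) (by norm_num))
    (pairwise_disjoint_of_card_eq_mul (m := 10) (by rw [h]) (by norm_num)) default default
  rw [h5, h3, h, card_eq_of_card_eq_mul _ hG5 (by norm_num),
    card_eq_of_card_eq_mul _ hG3 (by norm_num)] at this
  norm_num at this

theorem Sylow.subsingleton_five_of_card_dvd_sixty (h : Nat.card G ∣ 60) (h5 : 5 ∣ Nat.card G)
    (h60 : Nat.card G ≠ 60) : Subsingleton (Sylow 5 G) := by
  have : Fact (Nat.Prime 5) := ⟨by norm_num⟩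
  obtain ⟨m, hm⟩ := h5
  have hm12 : m ∣ 12 := Nat.dvd_of_mul_dvd_mul_left (by norm_num : 0 < 5) (hm ▸ h)
  have hle := Nat.le_of_dvd (by norm_num) hm12
  by_cases hm6 : m = 6
  · exact subsingleton_five_of_card_eq_thirty (by rw [hm, hm6])
  · refine Sylow.subsingleton_of_card_eq_mul_of_lt (k := 1) (m := m) (by rw [hm, pow_one]) ?_
    interval_cases m <;> omega

theorem isSimpleGroup_of_card_eq_sixty (hcard : Nat.card G = 60)
    (hgen : closure {g : G | orderOf g = 2} = ⊤) (P : Sylow 5 G)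
    (hP : ¬ (P : Subgroup G).Normal) : IsSimpleGroup G := by
  have : Fact (Nat.Prime 5) := ⟨by norm_num⟩
  have : Nontrivial G := Finite.one_lt_card_iff_nontrivial.mp (by omega)
  have eq_top_of_not_dvd : ∀ N : Subgroup G, N.Normal → ¬ 5 ∣ N.index → N = ⊤ := by
    intro N _ hN
    by_contra hne
    have h5N : 5 ∣ Nat.card N := by
      have : 5 ∣ Nat.card N * N.index := by rw [N.card_mul_index, hcard]; norm_num
      exact ((Nat.Prime.dvd_mul Fact.out).mp this).resolve_right hN
    have : Subsingleton (Sylow 5 N) := Sylow.subsingleton_five_of_card_dvd_sixty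
      (hcard ▸ N.card_subgroup_dvd_card) h5N
      (fun h => hne (card_eq_iff_eq_top N |>.mp (h.trans hcard.symm)))
    exact hP (P.normal_of_subsingleton_of_normal hN)
  refine ⟨fun N hN => or_iff_not_imp_left.mpr fun hbot => ?_⟩
  by_cases hN5 : 5 ∣ N.index
  · have hq60 : Nat.card (G ⧸ N) ≠ 60 := fun h => hbot <| card_eq_one.mp <| by
      have := N.card_mul_index
      rw [index_eq_card, h, hcard] at this
      omega
    have : Subsingleton (Sylow 5 (G ⧸ N)) := Sylow.subsingleton_five_of_card_dvd_sixty
      (index_eq_card N ▸ hcard ▸ N.index_dvd_card) (index_eq_card N ▸ hN5) hq60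
    let Q : Sylow 5 (G ⧸ N) := default
    have := Q.normal_of_subsingleton
    have hQ : (Q : Subgroup (G ⧸ N)).index = 1 := by
      rw [← index_comap_of_surjective _ (QuotientGroup.mk'_surjective N), index_eq_one]
      exact eq_top_of_not_dvd _ inferInstance (by
        rw [index_comap_of_surjective _ (QuotientGroup.mk'_surjective N)]
        exact Q.not_dvd_index)
    obtain ⟨n, hn⟩ := IsPGroup.iff_card.mp Q.isPGroup'
    refine N.eq_top_of_odd_index_of_closure_orderOf_eq_two hgen ?_
    rw [index_eq_card, ← card_top (G := G ⧸ N), ← index_eq_one.mp hQ, hn]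
    exact Odd.pow (by decide)
  · exact eq_top_of_not_dvd N hN hN5

end

namespace IsSimpleGroup

variable {G : Type*} [Group G] [IsSimpleGroup G]

theorem injective_toPermHom {M : Subgroup G} (hM : M ≠ ⊤) :
    Function.Injective (MulAction.toPermHom G (G ⧸ M)) := by
  rw [← MonoidHom.ker_eq_bot_iff, ← normalCore_eq_ker]
  exact (eq_bot_or_eq_top_of_normal _ (normalCore_normal M)).resolve_right
    fun h => hM (eq_top_iff.mpr (h ▸ normalCore_le M))

theorem not_normal_of_card_ne {N : Subgroup G} (h1 : Nat.card N ≠ 1)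
    (hG : Nat.card N ≠ Nat.card G) : ¬ N.Normal := fun hN =>
  (eq_bot_or_eq_top_of_normal N hN).elim (fun h => h1 (h ▸ card_bot)) fun h => hG (h ▸ card_top)

variable [Finite G]

theorem card_dvd_factorial_index {M : Subgroup G} (hM : M ≠ ⊤) : Nat.card G ∣ M.index ! := by
  rw [index_eq_card, ← Nat.card_perm]
  exact card_dvd_of_injective _ (injective_toPermHom hM)

theorem nonempty_mulEquiv_alternatingGroup {n : ℕ} (hcard : 2 * Nat.card G = n !)
    {M : Subgroup G} (hM : M.index = n) : Nonempty (G ≃* alternatingGroup (Fin n)) := by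
  classical
  have hMtop : M ≠ ⊤ := by
    rintro rfl
    rw [index_top] at hM
    subst hM
    simp at hcard
  have hφ := injective_toPermHom hMtop
  have : Fintype (G ⧸ M) := Fintype.ofFinite _
  have hrange : (MulAction.toPermHom G (G ⧸ M)).range = alternatingGroup (G ⧸ M) := by
    refine Equiv.Perm.eq_alternatingGroup_of_index_eq_two ?_
    have h := (MulAction.toPermHom G (G ⧸ M)).range.card_mul_index
    rw [Nat.card_perm, ← index_eq_card, hM, ← hcard,
      ← Nat.card_congr (MonoidHom.ofInjective hφ).toEquiv] at h
    exact Nat.eq_of_mul_eq_mul_left Nat.card_pos (h.trans (mul_comm 2 _))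
  let e : G ⧸ M ≃ Fin n := Finite.equivFinOfCardEq (index_eq_card M ▸ hM)
  exact ⟨(MonoidHom.ofInjective hφ).trans
    ((MulEquiv.subgroupCongr hrange).trans e.altCongrHom)⟩

theorem eq_top_of_index_lt_five_of_card_eq_sixty (hcard : Nat.card G = 60) {M : Subgroup G}
    (hM : M.index < 5) : M = ⊤ := by
  by_contra hne
  have := card_dvd_factorial_index hne
  rw [hcard] at this
  interval_cases M.index <;> simp [Nat.factorial] at this

theorem card_sylow_five_eq_six_of_card_eq_sixty (hcard : Nat.card G = 60) :
    Nat.card (Sylow 5 G) = 6 := by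
  have : Fact (Nat.Prime 5) := ⟨by norm_num⟩
  have hG : Nat.card G = 5 ^ 1 * 12 := by norm_num [hcard]
  refine Sylow.card_eq_of_not_subsingleton hG (by norm_num) (by decide) fun _ => ?_
  let P : Sylow 5 G := default
  have hP : Nat.card P = 5 ^ 1 := P.card_eq_of_card_eq_mul hG (by norm_num)
  exact not_normal_of_card_ne (by simp [hP]) (by simp [hP, hcard]) P.normal_of_subsingleton

theorem exists_index_eq_five_of_not_disjoint_of_card_eq_sixty (hcard : Nat.card G = 60)
    {P Q : Sylow 2 G} (hPQ : P ≠ Q) (hnd : ¬ Disjoint (P : Subgroup G) Q) :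
    ∃ M : Subgroup G, M.index = 5 := by
  have : Fact (Nat.Prime 2) := ⟨Nat.prime_two⟩
  have hG : Nat.card G = 2 ^ 2 * 15 := by norm_num [hcard]
  have hcard4 : ∀ R : Sylow 2 G, Nat.card R = 2 ^ 2 := fun R =>
    R.card_eq_of_card_eq_mul hG (by norm_num)
  obtain ⟨z, hzP, hzQ, hz⟩ :
      ∃ z ∈ (P : Subgroup G), z ∈ (Q : Subgroup G) ∧ z ≠ 1 := by
    simpa [Subgroup.disjoint_def] using hnd
  have hle : ∀ R : Sylow 2 G, z ∈ R → (R : Subgroup G) ≤ centralizer {z} := fun R hzR =>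
    (le_centralizer_iff_isMulCommutative.mpr
      (IsPGroup.isMulCommutative_of_card_eq_prime_sq (hcard4 R))).trans
      (centralizer_le (Set.singleton_subset_iff.mpr hzR))
  set C := centralizer {z}
  have h4 : 4 ∣ Nat.card C := by simpa [hcard4] using card_dvd_of_le (hle P hzP)
  have hne4 : Nat.card C ≠ 4 := fun h => hPQ <| Sylow.ext <|
    (eq_of_le_of_card_ge (hle P hzP) (by rw [h, hcard4]; norm_num)).trans
      (eq_of_le_of_card_ge (hle Q hzQ) (by rw [h, hcard4]; norm_num)).symm
  have hidx : C.index = 1 ∨ C.index = 3 ∨ C.index = 5 := by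
    obtain ⟨c, hc⟩ := h4
    have hmul := C.card_mul_index
    rw [hc, hcard] at hmul
    have h15 : C.index ∣ 15 := Dvd.intro_left c (by linarith)
    have hle15 := Nat.le_of_dvd (by norm_num) h15
    interval_cases C.index <;> omega
  have hCtop : C ≠ ⊤ := by
    intro hC
    have hzc : z ∈ center G := mem_center_iff.mpr fun g =>
      mem_centralizer_singleton_iff.mp (hC.symm ▸ mem_top g : g ∈ C)
    have hcenter : center G = ⊤ := (eq_bot_or_eq_top_of_normal _ inferInstance).resolve_left
      fun h => hz (mem_bot.mp (h ▸ hzc))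
    have := center_eq_top_iff.mp hcenter
    exact not_normal_of_card_ne (by simp [hcard4]) (by simp [hcard4, hcard])
      (normal_of_isMulCommutative (P : Subgroup G))
  refine ⟨C, ?_⟩
  by_contra h5
  exact hCtop (eq_top_of_index_lt_five_of_card_eq_sixty hcard (by omega))

theorem exists_index_eq_five_of_card_eq_sixty (hcard : Nat.card G = 60) :
    ∃ M : Subgroup G, M.index = 5 := by
  have : Fact (Nat.Prime 2) := ⟨Nat.prime_two⟩
  have : Fact (Nat.Prime 5) := ⟨by norm_num⟩
  have hG2 : Nat.card G = 2 ^ 2 * 15 := by norm_num [hcard]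
  have hG5 : Nat.card G = 5 ^ 1 * 12 := by norm_num [hcard]
  let P : Sylow 2 G := default
  have hP : Nat.card P = 2 ^ 2 := P.card_eq_of_card_eq_mul hG2 (by norm_num)
  have hPn : ¬ (P : Subgroup G).Normal :=
    not_normal_of_card_ne (by simp [hP]) (by simp [hP, hcard])
  have hn : Nat.card (Sylow 2 G) = (normalizer ((P : Subgroup G) : Set G)).index :=
    P.card_eq_index_normalizer
  have h5 : 5 ≤ Nat.card (Sylow 2 G) := by
    by_contra hlt
    exact hPn (normalizer_eq_top_iff.mp
      (eq_top_of_index_lt_five_of_card_eq_sixty hcard (by omega)))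
  have h15 : Nat.card (Sylow 2 G) = 5 ∨ Nat.card (Sylow 2 G) = 15 := by
    have hdvd := Sylow.card_dvd_of_card_eq_mul hG2 (by norm_num)
    have := Nat.le_of_dvd (by norm_num) hdvd
    interval_cases Nat.card (Sylow 2 G) <;> omega
  rcases h15 with h | h
  · exact ⟨_, hn ▸ h⟩
  by_cases hdisj : Pairwise fun P Q : Sylow 2 G => Disjoint (P : Subgroup G) Q
  · -- 15 Sylow 2-subgroups meeting trivially and 6 Sylow 5-subgroups would need 45 + 24
    -- nonidentity elements
    have := Sylow.card_mul_add_card_mul_lt (by norm_num : 2 ≠ 5) hdisj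
      (Sylow.pairwise_disjoint_of_card_eq_mul (m := 12) (by rw [hcard]) (by norm_num))
      P (default : Sylow 5 G)
    rw [h, card_sylow_five_eq_six_of_card_eq_sixty hcard, hP,
      Sylow.card_eq_of_card_eq_mul _ hG5 (by norm_num), hcard] at this
    norm_num at this
  · obtain ⟨P, Q, hPQ, hnd⟩ :
        ∃ P Q : Sylow 2 G, P ≠ Q ∧ ¬ Disjoint (P : Subgroup G) Q := by
      simpa [Pairwise] using hdisj
    exact exists_index_eq_five_of_not_disjoint_of_card_eq_sixty hcard hPQ hnd

end IsSimpleGroup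

theorem stmt_7_general (H : Type*) [Group H] (hcard : Nat.card H = 60)
    (hgen : Subgroup.closure {g : H | orderOf g = 2} = ⊤)
    (hsyl : ∃ P : Sylow 5 H, ¬ (P : Subgroup H).Normal) :
    Nonempty (H ≃* alternatingGroup (Fin 5)) := by
  have : Finite H := Nat.finite_of_card_ne_zero (by rw [hcard]; norm_num)
  obtain ⟨P, hP⟩ := hsyl
  have := isSimpleGroup_of_card_eq_sixty hcard hgen P hP
  obtain ⟨M, hM⟩ := IsSimpleGroup.exists_index_eq_five_of_card_eq_sixty hcard
  exact IsSimpleGroup.nonempty_mulEquiv_alternatingGroup (by rw [hcard]; rfl) hM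

/-- A group of order `60` generated by involutions, containing a subgroup isomorphic to
the dihedral group of order `6`, whose Sylow `5`-subgroup is not normal, is `A₅`. -/
theorem stmt_7 (H : Type*) [Group H] (hcard : Nat.card H = 60)
    (hgen : Subgroup.closure {g : H | orderOf g = 2} = ⊤)
    (hD6 : ∃ D : Subgroup H, Nonempty (D ≃* DihedralGroup 3))
    (hsyl : ∃ P : Sylow 5 H, ¬ (P : Subgroup H).Normal) :
    Nonempty (H ≃* alternatingGroup (Fin 5)) :=
  stmt_7_general H hcard hgen hsyl
end

section
/- Let $H$ be a group of order $24$ that is generated by involutions and has more than one involution, and suppose the Sylow $3$-subgroup of $H$ is not normal. Then $H \cong S_4$. -/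
/-!
The conjugation action of `H` on its four Sylow `3`-subgroups gives `φ : H →* S₄` whose kernel
lies in a Sylow normalizer, of order `6`; it has order `1` or `2`, since a kernel of order `3` or
`6` would make a Sylow `3`-subgroup normal. Order `1` makes `φ` an isomorphism. Order `2` makes
the image a subgroup of index `2`, i.e. `A₄`; then `H` maps onto `A₄ / V₄ ≅ C₃`, which is
impossible because a group generated by involutions has no nontrivial map to a group of odd
order.
-/

open Equiv Subgroup

theorem MonoidHom.eq_one_of_closure_orderOf_eq_two_eq_top {G M : Type*} [Group G] [Group M]
    (hG : closure {g : G | orderOf g = 2} = ⊤) (hM : Odd (Nat.card M)) (f : G →* M) :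
    f = 1 := by
  rw [← MonoidHom.ker_eq_top_iff, eq_top_iff, ← hG, closure_le]
  intro g (hg : orderOf g = 2)
  have h2 : orderOf (f g) ∣ 2 := hg ▸ orderOf_map_dvd f g
  have hodd : orderOf (f g) ∣ Nat.card M := orderOf_dvd_natCard (f g)
  exact orderOf_eq_one_iff.mp <|
    Nat.Coprime.eq_one_of_dvd (Nat.Coprime.coprime_dvd_left h2 (Nat.coprime_two_left.mpr hM))
      hodd

namespace alternatingGroup

variable {α : Type*} [DecidableEq α] [Fintype α]

theorem card_quotient_kleinFour (hα4 : Nat.card α = 4) :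
    Nat.card (alternatingGroup α ⧸ kleinFour α) = 3 := by
  have h := (kleinFour α).card_mul_index
  rw [kleinFour_card_of_card_eq_four hα4, card_of_card_eq_four hα4, index_eq_card] at h
  omega

theorem not_surjective_of_closure_orderOf_eq_two_eq_top {G : Type*} [Group G]
    (hα4 : Nat.card α = 4) (hG : closure {g : G | orderOf g = 2} = ⊤)
    (f : G →* alternatingGroup α) : ¬ Function.Surjective f := by
  intro hf
  have := normal_kleinFour hα4
  let q := (QuotientGroup.mk' (kleinFour α)).comp f
  have hq : q = 1 := q.eq_one_of_closure_orderOf_eq_two_eq_top hG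
    (by rw [card_quotient_kleinFour hα4]; decide)
  have hsurj : Function.Surjective q := (QuotientGroup.mk'_surjective _).comp hf
  have : Subsingleton (alternatingGroup α ⧸ kleinFour α) := by
    refine ⟨fun a b => ?_⟩
    obtain ⟨x, rfl⟩ := hsurj a
    obtain ⟨y, rfl⟩ := hsurj b
    rw [hq, MonoidHom.one_apply, MonoidHom.one_apply]
  have h1 := Finite.card_le_one_iff_subsingleton.mpr this
  rw [card_quotient_kleinFour hα4] at h1
  omega

end alternatingGroup

theorem Sylow.ker_toPermHom_le_normalizer {G : Type*} [Group G] {p : ℕ} (P : Sylow p G) :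
    (MulAction.toPermHom G (Sylow p G)).ker ≤ normalizer (P : Set G) := by
  rw [← P.stabilizer_eq_normalizer]
  intro g (hg : MulAction.toPermHom G (Sylow p G) g = 1)
  exact congr($hg P)

theorem Equiv.Perm.range_eq_alternatingGroup_of_card_ker_eq_two {G α : Type*} [Group G]
    [Fintype α] [DecidableEq α] (f : G →* Perm α) (hcard : Nat.card G = Nat.card (Perm α))
    (hker : Nat.card f.ker = 2) : f.range = alternatingGroup α := by
  apply eq_alternatingGroup_of_index_eq_two
  have hG := f.ker.card_mul_index
  rw [index_ker, hker, hcard, ← f.range.card_mul_index] at hG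
  exact (Nat.eq_of_mul_eq_mul_left (Nat.card_pos (α := f.range)) (mul_comm 2 _ ▸ hG)).symm

section OrderTwentyFour

variable {G : Type*} [Group G]

theorem Sylow.card_eq_three_of_card_eq_24 (hG : Nat.card G = 24) (P : Sylow 3 G) :
    Nat.card P = 3 := by
  have := Nat.finite_of_card_ne_zero (hG ▸ by norm_num : Nat.card G ≠ 0)
  rw [P.card_eq_multiplicity, hG, show (24 : ℕ) = 3 * 8 by norm_num,
    Nat.factorization_mul_apply_of_coprime (by norm_num), Nat.prime_three.factorization_self,
    Nat.factorization_eq_zero_of_not_dvd (by norm_num), pow_one]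

theorem card_sylow_three_eq_four (hG : Nat.card G = 24) (P : Sylow 3 G)
    (hP : ¬ (P : Subgroup G).Normal) : Nat.card (Sylow 3 G) = 4 := by
  have := Nat.finite_of_card_ne_zero (hG ▸ by norm_num : Nat.card G ≠ 0)
  have hdvd : Nat.card (Sylow 3 G) ∣ 24 :=
    hG ▸ P.card_dvd_index.trans (P : Subgroup G).index_dvd_card
  have hmod : Nat.card (Sylow 3 G) ≡ 1 [MOD 3] := card_sylow_modEq_one 3 G
  have hne : Nat.card (Sylow 3 G) ≠ 1 := fun h =>
    have := (Nat.card_eq_one_iff_unique.mp h).1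
    hP P.normal_of_subsingleton
  have hle := Nat.le_of_dvd (by norm_num) hdvd
  unfold Nat.ModEq at hmod
  interval_cases n : Nat.card (Sylow 3 G) <;> omega

theorem card_normalizer_sylow_three (hG : Nat.card G = 24) (P : Sylow 3 G)
    (hP : ¬ (P : Subgroup G).Normal) : Nat.card (normalizer (P : Set G)) = 6 := by
  have := Nat.finite_of_card_ne_zero (hG ▸ by norm_num : Nat.card G ≠ 0)
  have h := (normalizer (P : Set G)).card_mul_index
  rw [← P.card_eq_index_normalizer, card_sylow_three_eq_four hG P hP, hG] at h
  omega

theorem card_ker_toPermHom_sylow_three (hG : Nat.card G = 24) (P : Sylow 3 G)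
    (hP : ¬ (P : Subgroup G).Normal) :
    Nat.card (MulAction.toPermHom G (Sylow 3 G)).ker = 1 ∨
      Nat.card (MulAction.toPermHom G (Sylow 3 G)).ker = 2 := by
  have := Nat.finite_of_card_ne_zero (hG ▸ by norm_num : Nat.card G ≠ 0)
  set K := (MulAction.toPermHom G (Sylow 3 G)).ker
  have hN := card_normalizer_sylow_three hG P hP
  have hdvd : Nat.card K ∣ 6 := hN ▸ card_dvd_of_le P.ker_toPermHom_le_normalizer
  have hK3 : Nat.card K ≠ 3 := by
    intro h
    let Q := Sylow.ofCard K
      (by rw [h, ← P.card_eq_multiplicity, P.card_eq_three_of_card_eq_24 hG])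
    have hQ : (Q : Subgroup G).Normal := by
      rw [Sylow.coe_ofCard]
      exact MonoidHom.normal_ker _
    have := Q.unique_of_normal hQ
    exact hP (Subsingleton.elim Q P ▸ hQ)
  have hK6 : Nat.card K ≠ 6 := by
    intro h
    have hKN : K = normalizer (P : Set G) :=
      eq_of_le_of_card_ge P.ker_toPermHom_le_normalizer (by rw [h, hN])
    exact hP (P.normal_of_normalizer_normal (hKN ▸ MonoidHom.normal_ker _))
  have hle := Nat.le_of_dvd (by norm_num) hdvd
  have hpos : 0 < Nat.card K := Nat.card_pos
  interval_cases n : Nat.card K <;> omega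

end OrderTwentyFour

theorem stmt_10_general (H : Type*) [Group H] (hcard : Nat.card H = 24)
    (hgen : Subgroup.closure {g : H | orderOf g = 2} = ⊤)
    (hsyl : ∃ P : Sylow 3 H, ¬ (P : Subgroup H).Normal) :
    Nonempty (H ≃* Equiv.Perm (Fin 4)) := by
  classical
  obtain ⟨P, hP⟩ := hsyl
  have hX := card_sylow_three_eq_four hcard P hP
  have : Finite (Sylow 3 H) := Nat.finite_of_card_ne_zero (by omega)
  have : Fintype (Sylow 3 H) := Fintype.ofFinite _
  have hperm : Nat.card H = Nat.card (Perm (Sylow 3 H)) := by rw [Nat.card_perm, hX, hcard]; rfl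
  let φ := MulAction.toPermHom H (Sylow 3 H)
  rcases card_ker_toPermHom_sylow_three hcard P hP with hK | hK
  · have hinj : Function.Injective φ := (φ.ker_eq_bot_iff).mp (eq_bot_of_card_eq _ hK)
    exact ⟨(MulEquiv.ofBijective φ (hinj.bijective_of_nat_card_le hperm.ge)).trans
      (permCongrHom (Finite.equivFinOfCardEq hX))⟩
  · have hA := Perm.range_eq_alternatingGroup_of_card_ker_eq_two φ hperm hK
    exact (alternatingGroup.not_surjective_of_closure_orderOf_eq_two_eq_top hX hgen
      ((MulEquiv.subgroupCongr hA).toMonoidHom.comp φ.rangeRestrict)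
      ((MulEquiv.subgroupCongr hA).surjective.comp φ.rangeRestrict_surjective)).elim

/-- A group of order `24` generated by involutions, with more than one involution and a
non-normal Sylow `3`-subgroup, is isomorphic to `S₄`. -/
theorem stmt_10 (H : Type*) [Group H] (hcard : Nat.card H = 24)
    (hgen : Subgroup.closure {g : H | orderOf g = 2} = ⊤)
    (hinv : ∃ g h : H, orderOf g = 2 ∧ orderOf h = 2 ∧ g ≠ h)
    (hsyl : ∃ P : Sylow 3 H, ¬ (P : Subgroup H).Normal) :
    Nonempty (H ≃* Equiv.Perm (Fin 4)) :=
  stmt_10_general H hcard hgen hsyl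
end

section
/- The group $H = \langle x,y,s,t \mid x^2, y^2, s^2, t^2, (xy)^2, (st)^2, (yt)^2, (xyt)^3, (sty)^3, (xyst)^2 \rangle$ is isomorphic to $D_6 \times D_6$ (direct product of two dihedral groups of order $6$), and hence has order $36$. -/
/-!
Sending `x ↦ (sr 0, sr 1)`, `y ↦ (1, sr 1)`, `s ↦ (sr 1, sr 0)`, `t ↦ (sr 1, 1)` respects the
relators, so it defines `H →* D₆ × D₆` (with `D₆ = DihedralGroup 3`). Conversely, both pairs
`(xyt, xy)` and `(sty, st)` satisfy the dihedral relations `a³ = b² = (ba)² = 1` (because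
`xy · xyt = t` and `st · sty = y`), so each defines a map `D₆ →* H`. Their images commute, since
`xy` and `t` commute with `st` and `y` by the relators; hence they combine to `D₆ × D₆ →* H`, and
the two maps are inverse to each other, as one checks on generators.
-/

namespace Stmt19

/-- Generators: `0 ↦ x`, `1 ↦ y`, `2 ↦ s`, `3 ↦ t`. -/
def X : FreeGroup (Fin 4) := FreeGroup.of 0
def Y : FreeGroup (Fin 4) := FreeGroup.of 1
def S : FreeGroup (Fin 4) := FreeGroup.of 2
def T : FreeGroup (Fin 4) := FreeGroup.of 3

/-- Relators of `H = ⟨x,y,s,t | x²,y²,s²,t²,(xy)²,(st)²,(yt)²,(xyt)³,(sty)³,(xyst)²⟩`. -/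
def rels : Set (FreeGroup (Fin 4)) :=
  {X ^ 2, Y ^ 2, S ^ 2, T ^ 2, (X * Y) ^ 2, (S * T) ^ 2, (Y * T) ^ 2,
    (X * Y * T) ^ 3, (S * T * Y) ^ 3, (X * Y * S * T) ^ 2}

end Stmt19

section

variable {G : Type*} [Group G]

theorem inv_eq_self_of_sq_eq_one {g : G} (hg : g ^ 2 = 1) : g⁻¹ = g :=
  inv_eq_of_mul_eq_one_right (by rwa [← sq])

theorem commute_of_sq_eq_one {u v : G} (hu : u ^ 2 = 1) (hv : v ^ 2 = 1)
    (huv : (u * v) ^ 2 = 1) : Commute u v :=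
  calc u * v = (u * v)⁻¹ := (inv_eq_self_of_sq_eq_one huv).symm
    _ = v * u := by rw [mul_inv_rev, inv_eq_self_of_sq_eq_one hu, inv_eq_self_of_sq_eq_one hv]

theorem zpow_eq_zpow_of_intCast_eq {n : ℕ} {a : G} (ha : a ^ n = 1) {k l : ℤ}
    (h : (k : ZMod n) = l) : a ^ k = a ^ l := by
  rw [zpow_eq_zpow_iff_modEq]
  exact ((ZMod.intCast_eq_intCast_iff _ _ _).mp h).of_dvd
    (Int.natCast_dvd_natCast.mpr (orderOf_dvd_of_pow_eq_one ha))

theorem mul_zpow_eq_zpow_neg_mul {a b : G} (hb : b ^ 2 = 1) (hab : (b * a) ^ 2 = 1) (k : ℤ) :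
    b * a ^ k = a ^ (-k) * b := by
  have hconj : b * a * b⁻¹ = a⁻¹ := by
    rw [inv_eq_self_of_sq_eq_one hb]
    exact eq_inv_of_mul_eq_one_left (by rw [mul_assoc, ← sq, hab])
  rw [zpow_neg, ← inv_zpow, ← hconj, conj_zpow, inv_mul_cancel_right]

end

@[simp]
theorem PresentedGroup.mk_of {α : Type*} {rels : Set (FreeGroup α)} (a : α) :
    PresentedGroup.mk rels (FreeGroup.of a) = PresentedGroup.of a := rfl

namespace DihedralGroup

variable {n : ℕ} {G : Type*} [Group G] {a b : G}

def lift (ha : a ^ n = 1) (hb : b ^ 2 = 1) (hab : (b * a) ^ 2 = 1) : DihedralGroup n →* G where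
  toFun
    | r i => a ^ (ZMod.cast i : ℤ)
    | sr i => b * a ^ (ZMod.cast i : ℤ)
  map_one' := (congrArg (a ^ ·) ZMod.cast_zero).trans (zpow_zero a)
  map_mul' := by
    rintro (i | i) (j | j) <;> simp only [r_mul_r, r_mul_sr, sr_mul_r, sr_mul_sr]
    · rw [← zpow_add]
      exact zpow_eq_zpow_of_intCast_eq ha (by push_cast [ZMod.intCast_zmod_cast]; rfl)
    · rw [← mul_assoc, ← neg_neg (ZMod.cast i : ℤ), ← mul_zpow_eq_zpow_neg_mul hb hab, mul_assoc,
        ← zpow_add]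
      exact congrArg _ (zpow_eq_zpow_of_intCast_eq ha (by push_cast [ZMod.intCast_zmod_cast]; ring))
    · rw [mul_assoc, ← zpow_add]
      exact congrArg _ (zpow_eq_zpow_of_intCast_eq ha (by push_cast [ZMod.intCast_zmod_cast]; rfl))
    · rw [mul_zpow_eq_zpow_neg_mul hb hab, mul_assoc, ← mul_assoc b, ← sq, hb, one_mul, ← zpow_add]
      exact zpow_eq_zpow_of_intCast_eq ha (by push_cast [ZMod.intCast_zmod_cast]; ring)

theorem hom_ext {f g : DihedralGroup n →* G} (hr : f (r 1) = g (r 1)) (hsr : f (sr 0) = g (sr 0)) :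
    f = g := by
  have hr' (i : ZMod n) : f (r i) = g (r i) := by
    rw [← ZMod.intCast_zmod_cast i, ← r_one_zpow, map_zpow, map_zpow, hr]
  refine MonoidHom.ext fun h => ?_
  cases h with
  | r i => exact hr' i
  | sr i => rw [← zero_add i, ← sr_mul_r, map_mul, map_mul, hsr, hr']

variable (ha : a ^ n = 1) (hb : b ^ 2 = 1) (hab : (b * a) ^ 2 = 1)

@[simp]
theorem lift_r_one : lift ha hb hab (r 1) = a :=
  (zpow_eq_zpow_of_intCast_eq ha (by rw [ZMod.intCast_zmod_cast, Int.cast_one])).trans (zpow_one a)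

@[simp]
theorem lift_sr (i : ZMod n) : lift ha hb hab (sr i) = b * lift ha hb hab (r i) := rfl

theorem commute_lift {c : G} (hac : Commute a c) (hbc : Commute b c) (g : DihedralGroup n) :
    Commute (lift ha hb hab g) c := by
  cases g with
  | r i => exact hac.zpow_left _
  | sr i => exact hbc.mul_left (hac.zpow_left _)

end DihedralGroup

namespace Stmt19

open DihedralGroup

local notation "H" => PresentedGroup rels
local notation "x" => PresentedGroup.of (rels := rels) 0
local notation "y" => PresentedGroup.of (rels := rels) 1
local notation "s" => PresentedGroup.of (rels := rels) 2
local notation "t" => PresentedGroup.of (rels := rels) 3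

theorem x_sq : x ^ 2 = 1 := by
  simpa [X] using PresentedGroup.one_of_mem (show X ^ 2 ∈ rels by simp [rels])

theorem y_sq : y ^ 2 = 1 := by
  simpa [Y] using PresentedGroup.one_of_mem (show Y ^ 2 ∈ rels by simp [rels])

theorem s_sq : s ^ 2 = 1 := by
  simpa [S] using PresentedGroup.one_of_mem (show S ^ 2 ∈ rels by simp [rels])

theorem t_sq : t ^ 2 = 1 := by
  simpa [T] using PresentedGroup.one_of_mem (show T ^ 2 ∈ rels by simp [rels])

theorem xy_sq : (x * y) ^ 2 = 1 := by
  simpa [X, Y] using PresentedGroup.one_of_mem (show (X * Y) ^ 2 ∈ rels by simp [rels])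

theorem st_sq : (s * t) ^ 2 = 1 := by
  simpa [S, T] using PresentedGroup.one_of_mem (show (S * T) ^ 2 ∈ rels by simp [rels])

theorem yt_sq : (y * t) ^ 2 = 1 := by
  simpa [Y, T] using PresentedGroup.one_of_mem (show (Y * T) ^ 2 ∈ rels by simp [rels])

theorem xyt_pow_three : (x * y * t) ^ 3 = 1 := by
  simpa [X, Y, T] using PresentedGroup.one_of_mem (show (X * Y * T) ^ 3 ∈ rels by simp [rels])

theorem sty_pow_three : (s * t * y) ^ 3 = 1 := by
  simpa [S, T, Y] using PresentedGroup.one_of_mem (show (S * T * Y) ^ 3 ∈ rels by simp [rels])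

theorem xyst_sq : (x * y * (s * t)) ^ 2 = 1 := by
  simpa [X, Y, S, T, mul_assoc] using
    PresentedGroup.one_of_mem (show (X * Y * S * T) ^ 2 ∈ rels by simp [rels])

theorem xy_commute_st : Commute (x * y) (s * t) := commute_of_sq_eq_one xy_sq st_sq xyst_sq

theorem xy_commute_y : Commute (x * y) y :=
  (commute_of_sq_eq_one x_sq y_sq xy_sq).mul_left (Commute.refl y)

theorem t_commute_st : Commute t (s * t) :=
  (commute_of_sq_eq_one s_sq t_sq st_sq).symm.mul_right (Commute.refl t)

theorem y_commute_t : Commute y t := commute_of_sq_eq_one y_sq t_sq yt_sq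

theorem xy_mul_xyt : x * y * (x * y * t) = t := by
  rw [← mul_assoc, ← sq, xy_sq, one_mul]

theorem st_mul_sty : s * t * (s * t * y) = y := by
  rw [← mul_assoc, ← sq, st_sq, one_mul]

theorem xy_mul_y : x * y * y = x := by
  rw [mul_assoc, ← sq, y_sq, mul_one]

theorem t_mul_st : t * (s * t) = s := by
  rw [t_commute_st.eq, mul_assoc, ← sq, t_sq, mul_one]

def ofLeft : DihedralGroup 3 →* H :=
  lift xyt_pow_three xy_sq (by rw [xy_mul_xyt, t_sq])

def ofRight : DihedralGroup 3 →* H :=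
  lift sty_pow_three st_sq (by rw [st_mul_sty, y_sq])

theorem ofLeft_commute_ofRight (g h : DihedralGroup 3) :
    Commute (ofLeft g) (ofRight h) := by
  have hxyt_st : Commute (x * y * t) (s * t) := xy_commute_st.mul_left t_commute_st
  have hxyt_sty : Commute (x * y * t) (s * t * y) :=
    hxyt_st.mul_right (xy_commute_y.mul_left y_commute_t.symm)
  have hxy_sty : Commute (x * y) (s * t * y) := xy_commute_st.mul_right xy_commute_y
  exact commute_lift _ _ _
    (commute_lift _ _ _ hxyt_sty.symm hxyt_st.symm h).symm
    (commute_lift _ _ _ hxy_sty.symm xy_commute_st.symm h).symm g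

def ofProd : DihedralGroup 3 × DihedralGroup 3 →* H :=
  ofLeft.noncommCoprod ofRight ofLeft_commute_ofRight

def toProdGen : Fin 4 → DihedralGroup 3 × DihedralGroup 3 :=
  ![(sr 0, sr 1), (1, sr 1), (sr 1, sr 0), (sr 1, 1)]

def toProd : H →* DihedralGroup 3 × DihedralGroup 3 :=
  PresentedGroup.toGroup (f := toProdGen) (by
    rintro w (rfl | rfl | rfl | rfl | rfl | rfl | rfl | rfl | rfl | rfl) <;>
      simp [X, Y, S, T, toProdGen] <;> decide)

@[simp]
theorem toProd_of (i : Fin 4) : toProd (PresentedGroup.of i) = toProdGen i :=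
  PresentedGroup.toGroup.of _

theorem toProd_comp_ofLeft : toProd.comp ofLeft = MonoidHom.inl _ _ :=
  hom_ext (by simp [ofLeft, toProdGen]) (by simp [ofLeft, toProdGen])

theorem toProd_comp_ofRight : toProd.comp ofRight = MonoidHom.inr _ _ :=
  hom_ext (by simp [ofRight, toProdGen]) (by simp [ofRight, toProdGen])

theorem toProd_ofProd (g : DihedralGroup 3 × DihedralGroup 3) : toProd (ofProd g) = g := by
  have hl : toProd (ofLeft g.1) = (g.1, 1) := DFunLike.congr_fun toProd_comp_ofLeft g.1
  have hr : toProd (ofRight g.2) = (1, g.2) := DFunLike.congr_fun toProd_comp_ofRight g.2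
  rw [ofProd, MonoidHom.noncommCoprod_apply, map_mul, hl, hr, Prod.mk_mul_mk, mul_one, one_mul]

theorem ofProd_comp_toProd : ofProd.comp toProd = MonoidHom.id H := by
  refine PresentedGroup.ext fun i => ?_
  fin_cases i <;>
    simp [toProdGen, ofProd, ofLeft, ofRight, xy_mul_xyt, st_mul_sty, xy_mul_y, t_mul_st]

/-- The presented group `H` is isomorphic to `D₆ × D₆` and has order `36`. -/
theorem stmt_19 :
    Nonempty (PresentedGroup rels ≃* (DihedralGroup 3 × DihedralGroup 3)) ∧
    Nat.card (PresentedGroup rels) = 36 := by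
  let e : H ≃* DihedralGroup 3 × DihedralGroup 3 :=
    toProd.toMulEquiv ofProd ofProd_comp_toProd (MonoidHom.ext toProd_ofProd)
  refine ⟨⟨e⟩, ?_⟩
  rw [Nat.card_congr e.toEquiv, Nat.card_prod, nat_card]

end Stmt19
end
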